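/- arXiv:1806.11400 — 5 statements merged into one kernel-verified Lean document; each statement's English description precedes it below -/
import Mathlib

section
/- For all real numbers 0 < m ≤ M there exists a constant C > 0, depending only on m and M, such that for every a ≥ 0 and every b ∈ [m, M], a·log(a + 2) ≤ C·( a·log(a/b) − a + b + 1 ). -/
lemma gibbs_aux (a b : ℝ) (ha : 0 ≤ a) (hb : 0 < b) :
    0 ≤ a * Real.log (a / b) - a + b := by
  rcases ha.eq_or_lt with h | h
  · rw [← h]; simpa using hb.le
  · have hba : 0 < b / a := div_pos hb h
    have h1 := Real.log_le_sub_one_of_pos hba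
    have h2 : Real.log (b / a) = - Real.log (a / b) := by
      rw [Real.log_div hb.ne' h.ne', Real.log_div h.ne' hb.ne']; ring
    rw [h2] at h1
    have h3 : a * (- Real.log (a/b)) ≤ a * (b/a - 1) :=
      mul_le_mul_of_nonneg_left h1 h.le
    have h4 : a * (b/a - 1) = b - a := by field_simp
    nlinarith

/-- The relative entropy with respect to a density bounded between `m` and `M`
controls the `L log L` size of the density: there is `C = C(m, M) > 0` such that
`a·log(a + 2) ≤ C·(a·log(a/b) − a + b + 1)` for all `a ≥ 0` and `b ∈ [m, M]`. -/
theorem llogl_le_relative_entropy (m M : ℝ) (hm : 0 < m) (hmM : m ≤ M) :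
    ∃ C > 0, ∀ a ≥ (0:ℝ), ∀ b ∈ Set.Icc m M,
      a * Real.log (a + 2) ≤ C * (a * Real.log (a / b) - a + b + 1) := by
  set L := max 0 (Real.log (3*M)) with hLdef
  set T := max 1 (M * Real.exp (2 + L)) with hTdef
  set C := max 2 (T * Real.log (T+2)) with hCdef
  have hC2 : (2:ℝ) ≤ C := le_max_left _ _
  refine ⟨C, by linarith, ?_⟩
  intro a ha b hb
  obtain ⟨hbm, hbM⟩ := hb
  have hb0 : 0 < b := lt_of_lt_of_le hm hbm
  have hE : 0 ≤ a * Real.log (a / b) - a + b := gibbs_aux a b ha hb0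
  have hE1 : (1:ℝ) ≤ a * Real.log (a / b) - a + b + 1 := by linarith
  have hT1 : (1:ℝ) ≤ T := le_max_left _ _
  by_cases hcase : a ≤ T
  · have hlog : Real.log (a+2) ≤ Real.log (T+2) := by
      apply Real.log_le_log (by linarith) (by linarith)
    have hlogpos : 0 ≤ Real.log (a + 2) := Real.log_nonneg (by linarith)
    have h1 : a * Real.log (a+2) ≤ T * Real.log (T+2) :=
      mul_le_mul hcase hlog hlogpos (by linarith)
    have h2 : T * Real.log (T+2) ≤ C := le_max_right _ _
    have h3 : C ≤ C * (a * Real.log (a / b) - a + b + 1) :=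
      le_mul_of_one_le_right (by linarith) hE1
    linarith
  · push_neg at hcase
    have ha1 : (1:ℝ) ≤ a := le_trans hT1 hcase.le
    have ha0 : 0 < a := by linarith
    have hL0 : (0:ℝ) ≤ L := le_max_left _ _
    have hLlog : Real.log (3*b) ≤ L := by
      have h : Real.log (3*b) ≤ Real.log (3*M) :=
        Real.log_le_log (by positivity) (by nlinarith)
      exact h.trans (le_max_right _ _)
    have hexp : b * Real.exp (2+L) ≤ a := by
      have h1 : M * Real.exp (2+L) ≤ T := le_max_right _ _
      have h2 : b * Real.exp (2+L) ≤ M * Real.exp (2+L) :=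
        mul_le_mul_of_nonneg_right hbM (Real.exp_pos _).le
      linarith
    have hlogab : 2 + L ≤ Real.log (a / b) := by
      rw [Real.le_log_iff_exp_le (div_pos ha0 hb0), le_div_iff₀ hb0]
      linarith
    have key1 : Real.log (a + 2) ≤ Real.log (a/b) + L := by
      have h1 : Real.log (a+2) ≤ Real.log (3*a) :=
        Real.log_le_log (by linarith) (by linarith)
      have h2 : Real.log (3*a) = Real.log (a/b) + Real.log (3*b) := by
        rw [← Real.log_mul (by positivity) (by positivity)]
        congr 1; field_simp
      linarith
    have key2 : a * Real.log (a+2) ≤ a * Real.log (a/b) + a * L := by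
      nlinarith [mul_le_mul_of_nonneg_left key1 ha]
    have key3 : a * (2 + L) ≤ a * Real.log (a/b) :=
      mul_le_mul_of_nonneg_left hlogab ha
    have hE2' : a + a * L ≤ a * Real.log (a / b) - a + b := by nlinarith
    have h4 : a * Real.log (a+2) ≤ 2 * (a * Real.log (a / b) - a + b + 1) := by
      linarith
    have h5 : 2 * (a * Real.log (a / b) - a + b + 1)
        ≤ C * (a * Real.log (a / b) - a + b + 1) :=
      mul_le_mul_of_nonneg_right hC2 (by linarith)
    linarith
end

section
/- Let τ > 0, L ≥ 0, K ≥ 0. Let y : [0, ∞) → ℝ be continuous, nonnegative, and differentiable on (0, ∞), and let a : [0, ∞) → ℝ be continuous and nonnegative. Assume: (i) y′(t) ≤ a(t)·y(t) for all t > 0; (ii) ∫_s^{s+τ} a(t) dt ≤ L for every s ≥ 0; (iii) ∫_s^{s+τ} y(t) dt ≤ K for every s ≥ 0. Then y(t) ≤ (2K/τ)·exp(L) for every t ≥ τ/2. -/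
open MeasureTheory Set

/-- Uniform-in-time Gronwall/Chebyshev lemma: a nonnegative quantity `y`
satisfying `y′ ≤ a·y` with `∫_s^{s+τ} a ≤ L` and `∫_s^{s+τ} y ≤ K` on every
window of length `τ` is bounded by `(2K/τ)·exp L` for all `t ≥ τ/2`. -/
theorem uniform_gronwall_chebyshev (τ L K : ℝ) (hτ : 0 < τ) (hL : 0 ≤ L) (hK : 0 ≤ K)
    (y y' a : ℝ → ℝ)
    (hy_cont : ContinuousOn y (Ici 0))
    (hy_nonneg : ∀ t ∈ Ici (0:ℝ), 0 ≤ y t)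
    (hy_deriv : ∀ t > (0:ℝ), HasDerivAt y (y' t) t)
    (ha_cont : ContinuousOn a (Ici 0))
    (ha_nonneg : ∀ t ∈ Ici (0:ℝ), 0 ≤ a t)
    (hineq : ∀ t > (0:ℝ), y' t ≤ a t * y t)
    (ha_int : ∀ s ≥ (0:ℝ), (∫ t in s..(s + τ), a t) ≤ L)
    (hy_int : ∀ s ≥ (0:ℝ), (∫ t in s..(s + τ), y t) ≤ K) :
    ∀ t ≥ τ / 2, y t ≤ (2 * K / τ) * Real.exp L := by
  intro t ht
  set s := t - τ / 2 with hs_def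
  have hs0 : (0:ℝ) ≤ s := by simp only [hs_def]; linarith
  have hst : s ≤ t := by simp only [hs_def]; linarith
  have ht0 : (0:ℝ) ≤ t := le_trans hs0 hst
  have hIcc_sub : Icc s t ⊆ Ici (0:ℝ) := fun x hx => le_trans hs0 hx.1
  -- minimum point of y on [s, t]
  obtain ⟨s₀, hs₀_mem, hs₀_min⟩ :=
    (isCompact_Icc).exists_isMinOn (nonempty_Icc.2 hst) (hy_cont.mono hIcc_sub)
  have hs₀0 : (0:ℝ) ≤ s₀ := le_trans hs0 hs₀_mem.1
  have hs₀t : s₀ ≤ t := hs₀_mem.2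
  -- integrability of y on [s, t] and [t, s+τ]
  have hy_int_st : IntervalIntegrable y volume s t := by
    apply ContinuousOn.intervalIntegrable
    exact hy_cont.mono (by rw [uIcc_of_le hst]; exact hIcc_sub)
  have htsτ : t ≤ s + τ := by simp only [hs_def]; linarith
  have hy_int_tsτ : IntervalIntegrable y volume t (s + τ) := by
    apply ContinuousOn.intervalIntegrable
    exact hy_cont.mono (by rw [uIcc_of_le htsτ]; exact fun x hx => le_trans ht0 hx.1)
  -- Chebyshev estimate: y s₀ ≤ 2K/τ
  have hcheb : y s₀ ≤ 2 * K / τ := by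
    have h1 : (∫ x in s..t, (fun _ => y s₀) x) ≤ ∫ x in s..t, y x :=
      intervalIntegral.integral_mono_on hst intervalIntegrable_const hy_int_st
        (fun x hx => hs₀_min hx)
    rw [intervalIntegral.integral_const, smul_eq_mul] at h1
    have h2 : (∫ x in s..t, y x) ≤ ∫ x in s..(s + τ), y x := by
      rw [← intervalIntegral.integral_add_adjacent_intervals hy_int_st hy_int_tsτ]
      have h3 : 0 ≤ ∫ x in t..(s + τ), y x :=
        intervalIntegral.integral_nonneg htsτ
          (fun x hx => hy_nonneg x (le_trans ht0 hx.1))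
      linarith
    have h4 := le_trans h2 (hy_int s hs0)
    have hts : t - s = τ / 2 := by simp [hs_def]
    rw [hts] at h1
    rw [le_div_iff₀ hτ]
    nlinarith
  -- Gronwall from s₀ to t
  set A : ℝ → ℝ := fun u => ∫ x in s₀..u, a x with hA_def
  have ha_int_uIcc : IntegrableOn a (uIcc s₀ t) volume := by
    rw [uIcc_of_le hs₀t]
    exact (ha_cont.mono fun x hx => le_trans hs₀0 hx.1).integrableOn_Icc
  have hA_cont : ContinuousOn A (Icc s₀ t) := by
    have := intervalIntegral.continuousOn_primitive_interval ha_int_uIcc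
    rwa [uIcc_of_le hs₀t] at this
  have hA_deriv : ∀ u ∈ Ioo s₀ t, HasDerivAt A (a u) u := by
    intro u hu
    have hu0 : (0:ℝ) < u := lt_of_le_of_lt hs₀0 hu.1
    refine intervalIntegral.integral_hasDerivAt_right ?_ ?_ ?_
    · apply ContinuousOn.intervalIntegrable
      exact ha_cont.mono (by rw [uIcc_of_le hu.1.le]; exact fun x hx => le_trans hs₀0 hx.1)
    · exact ContinuousOn.stronglyMeasurableAtFilter isOpen_Ioi
        (ha_cont.mono fun x hx => le_of_lt hx) u hu0
    · exact ha_cont.continuousAt (Ici_mem_nhds hu0)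
  set g : ℝ → ℝ := fun u => y u * Real.exp (-(A u)) with hg_def
  have hg_deriv : ∀ u ∈ Ioo s₀ t,
      HasDerivAt g (y' u * Real.exp (-(A u)) + y u * (Real.exp (-(A u)) * -(a u))) u := by
    intro u hu
    have hu0 : (0:ℝ) < u := lt_of_le_of_lt hs₀0 hu.1
    exact (hy_deriv u hu0).mul (((hA_deriv u hu).neg).exp)
  have hanti : AntitoneOn g (Icc s₀ t) := by
    apply antitoneOn_of_deriv_nonpos (convex_Icc s₀ t)
    · exact ((hy_cont.mono fun x hx => le_trans hs₀0 hx.1).mul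
        (Real.continuous_exp.comp_continuousOn hA_cont.neg))
    · intro x hx
      rw [interior_Icc] at hx
      exact (hg_deriv x hx).differentiableAt.differentiableWithinAt
    · intro x hx
      rw [interior_Icc] at hx
      rw [(hg_deriv x hx).deriv]
      have hx0 : (0:ℝ) < x := lt_of_le_of_lt hs₀0 hx.1
      have h1 : y' x - a x * y x ≤ 0 := sub_nonpos.2 (hineq x hx0)
      nlinarith [Real.exp_pos (-(A x))]
  have hgt : g t ≤ g s₀ :=
    hanti (left_mem_Icc.2 hs₀t) (right_mem_Icc.2 hs₀t) hs₀t
  have hgs₀ : g s₀ = y s₀ := by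
    simp [hg_def, hA_def, intervalIntegral.integral_same]
  -- A t ≤ L
  have ha_int_s₀t : IntervalIntegrable a volume s₀ t := by
    apply ContinuousOn.intervalIntegrable
    exact ha_cont.mono (by rw [uIcc_of_le hs₀t]; exact fun x hx => le_trans hs₀0 hx.1)
  have hts₀τ : t ≤ s₀ + τ := by
    have := hs₀_mem.1
    simp only [hs_def] at this
    linarith
  have ha_int_tτ : IntervalIntegrable a volume t (s₀ + τ) := by
    apply ContinuousOn.intervalIntegrable
    exact ha_cont.mono (by rw [uIcc_of_le hts₀τ]; exact fun x hx => le_trans ht0 hx.1)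
  have hAtL : A t ≤ L := by
    have h2 : A t ≤ ∫ x in s₀..(s₀ + τ), a x := by
      rw [← intervalIntegral.integral_add_adjacent_intervals ha_int_s₀t ha_int_tτ]
      have h3 : 0 ≤ ∫ x in t..(s₀ + τ), a x :=
        intervalIntegral.integral_nonneg hts₀τ (fun x hx => ha_nonneg x (le_trans ht0 hx.1))
      simp only [hA_def]
      linarith
    exact le_trans h2 (ha_int s₀ hs₀0)
  -- conclude
  rw [hgs₀] at hgt
  have h5 := mul_le_mul_of_nonneg_right hgt (Real.exp_pos (A t)).le
  rw [hg_def] at h5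
  simp only at h5
  rw [mul_assoc, ← Real.exp_add, neg_add_cancel, Real.exp_zero, mul_one] at h5
  calc y t ≤ y s₀ * Real.exp (A t) := h5
    _ ≤ (2 * K / τ) * Real.exp L := by
        apply mul_le_mul hcheb (Real.exp_le_exp.2 hAtL) (Real.exp_pos _).le
        positivity
end

section
/- Let Ω ⊂ ℝ² be a bounded, open, nonempty set, ε > 0, N ≥ 1, z_1, …, z_N ∈ ℝ and I_1⁰, …, I_N⁰ > 0. For k = 1, 2 let Φ_k : ℝ² → ℝ be continuous on the closure of Ω, twice continuously differentiable in Ω, have square-integrable gradient on Ω, and satisfy, for every x ∈ Ω, −ε·ΔΦ_k(x) = Σ_{i=1}^N z_i·I_i⁰·e^{−z_iΦ_k(x)} / ( ∫_Ω e^{−z_iΦ_k(y)} dy ). If Φ_1 = Φ_2 on the boundary ∂Ω, then Φ_1 = Φ_2 on the closure of Ω. -/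
open MeasureTheory Set Filter Topology

/-- The Laplacian `ΔΦ(x) = Σ_j ∂²Φ/∂x_j²(x)` of a scalar function on
`ℝ^d = EuclideanSpace ℝ (Fin d)`. -/
noncomputable def laplacian {d : ℕ} (Φ : EuclideanSpace ℝ (Fin d) → ℝ)
    (x : EuclideanSpace ℝ (Fin d)) : ℝ :=
  ∑ j : Fin d,
    fderiv ℝ (fun y => fderiv ℝ Φ y (EuclideanSpace.single j 1)) x
      (EuclideanSpace.single j 1)

section Helpers

variable {d : ℕ} {u v : EuclideanSpace ℝ (Fin d) → ℝ} {x x₀ : EuclideanSpace ℝ (Fin d)}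

lemma contDiffAt_fderiv_apply (hu : ContDiffAt ℝ 2 u x) (e : EuclideanSpace ℝ (Fin d)) :
    ContDiffAt ℝ 1 (fun y => fderiv ℝ u y e) x :=
  (hu.fderiv_right (by norm_num)).clm_apply contDiffAt_const

lemma eventually_differentiableAt (hu : ContDiffAt ℝ 2 u x) :
    ∀ᶠ y in 𝓝 x, DifferentiableAt ℝ u y :=
  (hu.eventually (by norm_num)).mono fun y hy => hy.differentiableAt (by norm_num)

lemma laplacian_add (hu : ContDiffAt ℝ 2 u x) (hv : ContDiffAt ℝ 2 v x) :
    laplacian (fun y => u y + v y) x = laplacian u x + laplacian v x := by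
  unfold laplacian
  rw [← Finset.sum_add_distrib]
  refine Finset.sum_congr rfl fun j _ => ?_
  set e := (EuclideanSpace.single j 1 : EuclideanSpace ℝ (Fin d)) with he
  have hev : (fun y => fderiv ℝ (fun z => u z + v z) y e)
      =ᶠ[𝓝 x] fun y => fderiv ℝ u y e + fderiv ℝ v y e := by
    filter_upwards [eventually_differentiableAt hu, eventually_differentiableAt hv]
      with y hy1 hy2
    rw [fderiv_fun_add hy1 hy2, ContinuousLinearMap.add_apply]
  have h1 : DifferentiableAt ℝ (fun y => fderiv ℝ u y e) x :=
    (contDiffAt_fderiv_apply hu e).differentiableAt one_ne_zero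
  have h2 : DifferentiableAt ℝ (fun y => fderiv ℝ v y e) x :=
    (contDiffAt_fderiv_apply hv e).differentiableAt one_ne_zero
  rw [hev.fderiv_eq, fderiv_fun_add h1 h2, ContinuousLinearMap.add_apply]

lemma laplacian_const_mul (c : ℝ) (hu : ContDiffAt ℝ 2 u x) :
    laplacian (fun y => c * u y) x = c * laplacian u x := by
  unfold laplacian
  rw [Finset.mul_sum]
  refine Finset.sum_congr rfl fun j _ => ?_
  set e := (EuclideanSpace.single j 1 : EuclideanSpace ℝ (Fin d)) with he
  have hev : (fun y => fderiv ℝ (fun z => c * u z) y e)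
      =ᶠ[𝓝 x] fun y => c * fderiv ℝ u y e := by
    filter_upwards [eventually_differentiableAt hu] with y hy1
    rw [fderiv_const_mul hy1, ContinuousLinearMap.smul_apply, smul_eq_mul]
  have h1 : DifferentiableAt ℝ (fun y => fderiv ℝ u y e) x :=
    (contDiffAt_fderiv_apply hu e).differentiableAt one_ne_zero
  rw [hev.fderiv_eq, fderiv_const_mul h1, ContinuousLinearMap.smul_apply, smul_eq_mul]

lemma laplacian_sub (hu : ContDiffAt ℝ 2 u x) (hv : ContDiffAt ℝ 2 v x) :
    laplacian (fun y => u y - v y) x = laplacian u x - laplacian v x := by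
  have h : (fun y => u y - v y) = fun y => u y + (-1 : ℝ) * v y := by
    funext y; ring
  rw [h, laplacian_add hu (contDiffAt_const.mul hv), laplacian_const_mul (-1) hv]
  ring

lemma second_deriv_nonpos (hu : ContDiffAt ℝ 2 u x₀) (hmax : IsLocalMax u x₀)
    (e : EuclideanSpace ℝ (Fin d)) :
    fderiv ℝ (fun y => fderiv ℝ u y e) x₀ e ≤ 0 := by
  by_contra hL'
  push_neg at hL'
  set L := fderiv ℝ (fun y => fderiv ℝ u y e) x₀ e with hLdef
  set c : ℝ → EuclideanSpace ℝ (Fin d) := fun t => x₀ + t • e with hc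
  have hc0 : c 0 = x₀ := by simp [hc]
  have hcderiv : ∀ t, HasDerivAt c e t := fun t => by
    have := ((hasDerivAt_id t).smul_const e).const_add x₀
    simp only [id, one_smul] at this
    exact this
  have hctend : Tendsto c (𝓝 0) (𝓝 x₀) := by
    have := (hcderiv 0).continuousAt.tendsto
    rwa [hc0] at this
  set g : ℝ → ℝ := fun t => u (c t) with hgdef
  set h : ℝ → ℝ := fun t => fderiv ℝ u (c t) e with hhdef
  have hudiff : ∀ᶠ y in 𝓝 x₀, DifferentiableAt ℝ u y := eventually_differentiableAt hu
  have hg' : ∀ᶠ t in 𝓝 (0:ℝ), HasDerivAt g (h t) t := by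
    filter_upwards [hctend.eventually hudiff] with t ht
    exact ht.hasFDerivAt.comp_hasDerivAt t (hcderiv t)
  have houter : HasFDerivAt (fun y => fderiv ℝ u y e)
      (fderiv ℝ (fun y => fderiv ℝ u y e) x₀) x₀ :=
    ((contDiffAt_fderiv_apply hu e).differentiableAt one_ne_zero).hasFDerivAt
  have hh : HasDerivAt h L 0 := by
    have houter' : HasFDerivAt (fun y => fderiv ℝ u y e)
        (fderiv ℝ (fun y => fderiv ℝ u y e) x₀) (c 0) := hc0.symm ▸ houter
    have := houter'.comp_hasDerivAt 0 (hcderiv 0)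
    exact this
  have h0 : h 0 = 0 := by
    simp [hhdef, hc0, hmax.fderiv_eq_zero]
  have hslope : Tendsto (slope h 0) (𝓝[≠] (0:ℝ)) (𝓝 L) :=
    hasDerivAt_iff_tendsto_slope.mp hh
  have hpos : ∀ᶠ t in 𝓝[>] (0:ℝ), 0 < h t := by
    have h1 : ∀ᶠ t in 𝓝[>] (0:ℝ), 0 < slope h 0 t := by
      have := hslope.mono_left (nhdsWithin_mono 0 (fun t (ht : t ∈ Ioi (0:ℝ)) => ne_of_gt ht))
      exact this.eventually (eventually_gt_nhds hL')
    filter_upwards [h1, self_mem_nhdsWithin] with t ht (ht' : 0 < t)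
    have heq : slope h 0 t = h t / t := by simp [slope_def_field, h0]
    rw [heq] at ht
    have := mul_pos ht ht'
    rwa [div_mul_cancel₀ _ (ne_of_gt ht')] at this
  have hgmax : ∀ᶠ t in 𝓝 (0:ℝ), g t ≤ g 0 := by
    have := hctend.eventually hmax
    simpa [hgdef, hc0] using this
  obtain ⟨η₁, hη₁, H₁⟩ := Metric.eventually_nhds_iff.mp (hg'.and hgmax)
  obtain ⟨η₂, hη₂, H₂⟩ := Metric.eventually_nhds_iff.mp (eventually_nhdsWithin_iff.mp hpos)
  set η := min η₁ η₂ / 2 with hηdef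
  have hη : 0 < η := by positivity
  have hηlt₁ : η < η₁ := by
    have : min η₁ η₂ ≤ η₁ := min_le_left _ _
    rw [hηdef]; linarith
  have hηlt₂ : η < η₂ := by
    have : min η₁ η₂ ≤ η₂ := min_le_right _ _
    rw [hηdef]; linarith
  have hball₁ : ∀ t ∈ Icc (0:ℝ) η, dist t 0 < η₁ := by
    intro t ht
    rw [Real.dist_eq, sub_zero, abs_of_nonneg ht.1]
    exact lt_of_le_of_lt ht.2 hηlt₁
  have hmono : StrictMonoOn g (Icc 0 η) := by
    apply strictMonoOn_of_deriv_pos (convex_Icc 0 η)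
    · intro t ht
      exact ((H₁ (hball₁ t ht)).1.continuousAt).continuousWithinAt
    · intro t ht
      rw [interior_Icc] at ht
      rw [(H₁ (hball₁ t (Ioo_subset_Icc_self ht))).1.deriv]
      refine H₂ ?_ ht.1
      rw [Real.dist_eq, sub_zero, abs_of_nonneg ht.1.le]
      exact lt_trans ht.2 hηlt₂
  have hlt : g 0 < g η := hmono (left_mem_Icc.mpr hη.le) (right_mem_Icc.mpr hη.le) hη
  have hle : g η ≤ g 0 :=
    (H₁ (by rw [Real.dist_eq, sub_zero, abs_of_nonneg hη.le]; exact hηlt₁)).2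
  exact absurd hlt (not_lt.mpr hle)

lemma laplacian_nonpos_of_isLocalMax (hu : ContDiffAt ℝ 2 u x₀) (hmax : IsLocalMax u x₀) :
    laplacian u x₀ ≤ 0 :=
  Finset.sum_nonpos fun j _ => second_deriv_nonpos hu hmax _

end Helpers

section Quadratic

noncomputable def qf {d : ℕ} : EuclideanSpace ℝ (Fin d) → ℝ := fun x => ∑ j, x j ^ 2

lemma qf_nonneg {d : ℕ} (x : EuclideanSpace ℝ (Fin d)) : 0 ≤ qf x :=
  Finset.sum_nonneg fun j _ => sq_nonneg _

lemma qf_contDiff {d : ℕ} {n : WithTop ℕ∞} : ContDiff ℝ n (qf (d := d)) := by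
  apply ContDiff.sum fun j _ => ?_
  exact (EuclideanSpace.proj (𝕜 := ℝ) j).contDiff.pow 2

lemma qf_continuous {d : ℕ} : Continuous (qf (d := d)) := qf_contDiff (n := 0).continuous

lemma qf_hasFDerivAt {d : ℕ} (y : EuclideanSpace ℝ (Fin d)) :
    HasFDerivAt qf
      (∑ j, (2 * y j) • (EuclideanSpace.proj j : EuclideanSpace ℝ (Fin d) →L[ℝ] ℝ)) y := by
  have h : ∀ j : Fin d, HasFDerivAt (fun x : EuclideanSpace ℝ (Fin d) => x j ^ 2)
      ((2 * y j) • (EuclideanSpace.proj j : EuclideanSpace ℝ (Fin d) →L[ℝ] ℝ)) y := by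
    intro j
    have hp : HasFDerivAt (fun x : EuclideanSpace ℝ (Fin d) => x j)
        (EuclideanSpace.proj j : EuclideanSpace ℝ (Fin d) →L[ℝ] ℝ) y :=
      (EuclideanSpace.proj j : EuclideanSpace ℝ (Fin d) →L[ℝ] ℝ).hasFDerivAt
    have hmul := hp.fun_mul hp
    have heq : (fun x : EuclideanSpace ℝ (Fin d) => x j * x j)
        = fun x : EuclideanSpace ℝ (Fin d) => x j ^ 2 := by funext x; ring
    rw [heq] at hmul
    refine hmul.congr_fderiv ?_
    ext w
    simp [two_mul]
    ring
  exact HasFDerivAt.fun_sum fun j _ => h j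

lemma laplacian_qf {d : ℕ} (x : EuclideanSpace ℝ (Fin d)) :
    laplacian (qf (d := d)) x = 2 * d := by
  unfold laplacian
  have key : ∀ i : Fin d,
      fderiv ℝ (fun y => fderiv ℝ (qf (d := d)) y (EuclideanSpace.single i 1)) x
        (EuclideanSpace.single i 1) = 2 := by
    intro i
    set e := (EuclideanSpace.single i 1 : EuclideanSpace ℝ (Fin d)) with he
    set S : EuclideanSpace ℝ (Fin d) →L[ℝ] ℝ :=
      ∑ j, (2 * e j) • (EuclideanSpace.proj j : EuclideanSpace ℝ (Fin d) →L[ℝ] ℝ) with hS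
    have h1 : (fun y => fderiv ℝ (qf (d := d)) y e) = fun y => S y := by
      funext y
      rw [(qf_hasFDerivAt y).fderiv]
      simp [hS, ContinuousLinearMap.sum_apply]
      exact Finset.sum_congr rfl fun j _ => by ring
    rw [h1]
    rw [S.fderiv]
    have h2 : S e = ∑ j, 2 * e j * e j := by
      simp [hS, ContinuousLinearMap.sum_apply]
    rw [h2]
    have h3 : ∀ j : Fin d, 2 * e j * e j = if j = i then 2 else 0 := by
      intro j
      rw [he]
      by_cases hji : j = i <;> simp [EuclideanSpace.single_apply, hji]
    rw [Finset.sum_congr rfl fun j _ => h3 j]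
    simp
  rw [Finset.sum_congr rfl fun i _ => key i]
  simp [mul_comm]

end Quadratic

section Topology

lemma eq_zero_on_of_integral_eq_zero {Ω : Set (EuclideanSpace ℝ (Fin 2))} (hΩ_open : IsOpen Ω)
    {G : EuclideanSpace ℝ (Fin 2) → ℝ} (hG : ∀ y ∈ Ω, ContinuousAt G y)
    (hnn : ∀ y ∈ Ω, 0 ≤ G y) (hint : IntegrableOn G Ω)
    (hzero : ∫ y in Ω, G y = 0) : ∀ y ∈ Ω, G y = 0 := by
  have hae : G =ᵐ[volume.restrict Ω] 0 :=
    (setIntegral_eq_zero_iff_of_nonneg_ae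
      ((ae_restrict_iff' hΩ_open.measurableSet).mpr (ae_of_all _ hnn)) hint).mp hzero
  have hae' : ∀ᵐ y ∂(volume : Measure (EuclideanSpace ℝ (Fin 2))), y ∈ Ω → G y = 0 :=
    (ae_restrict_iff' hΩ_open.measurableSet).mp hae
  intro y₀ hy₀
  by_contra hne
  have hpos : 0 < G y₀ := lt_of_le_of_ne (hnn y₀ hy₀) (Ne.symm hne)
  have h1 : ∀ᶠ y in 𝓝 y₀, 0 < G y := (hG y₀ hy₀).eventually (eventually_gt_nhds hpos)
  have h2 : ∀ᶠ y in 𝓝 y₀, y ∈ Ω := hΩ_open.mem_nhds hy₀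
  obtain ⟨U, hUsub, hUopen, hy₀U⟩ := mem_nhds_iff.mp (h1.and h2)
  have hnull : volume {y | ¬(y ∈ Ω → G y = 0)} = 0 := ae_iff.mp hae'
  have hUnull : volume U = 0 := by
    apply measure_mono_null ?_ hnull
    intro y hy
    obtain ⟨hGy, hyΩ⟩ := hUsub hy
    intro hcon
    exact (ne_of_gt hGy) (hcon hyΩ)
  exact (hUopen.measure_pos volume ⟨y₀, hy₀U⟩).ne' hUnull

lemma frontier_nonempty_of_bounded {Ω : Set (EuclideanSpace ℝ (Fin 2))} (hΩ_open : IsOpen Ω)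
    (hΩ_bdd : Bornology.IsBounded Ω) (hΩ_ne : Ω.Nonempty) : (frontier Ω).Nonempty := by
  rw [nonempty_iff_ne_empty]
  intro hfe
  have hclosed : IsClosed Ω := by
    apply isClosed_of_closure_subset
    rw [closure_eq_self_union_frontier, hfe, union_empty]
  rcases isClopen_iff.mp ⟨hclosed, hΩ_open⟩ with h | h
  · exact hΩ_ne.ne_empty h
  · rw [h] at hΩ_bdd
    exact NormedSpace.unbounded_univ ℝ (EuclideanSpace ℝ (Fin 2)) hΩ_bdd

end Topology

section Key

lemma key_le
    (Ω : Set (EuclideanSpace ℝ (Fin 2))) (hΩ_open : IsOpen Ω)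
    (hΩ_bdd : Bornology.IsBounded Ω) (hΩ_ne : Ω.Nonempty)
    (ε : ℝ) (hε : 0 < ε) (N : ℕ)
    (z I : Fin N → ℝ) (hI : ∀ i, 0 < I i)
    (Φ₁ Φ₂ : EuclideanSpace ℝ (Fin 2) → ℝ)
    (hΦ₁_cont : ContinuousOn Φ₁ (closure Ω)) (hΦ₂_cont : ContinuousOn Φ₂ (closure Ω))
    (hΦ₁_smooth : ContDiffOn ℝ 2 Φ₁ Ω) (hΦ₂_smooth : ContDiffOn ℝ 2 Φ₂ Ω)
    (hpde₁ : ∀ x ∈ Ω, -ε * laplacian Φ₁ x =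
      ∑ i, z i * I i * Real.exp (-(z i) * Φ₁ x) / ∫ y in Ω, Real.exp (-(z i) * Φ₁ y))
    (hpde₂ : ∀ x ∈ Ω, -ε * laplacian Φ₂ x =
      ∑ i, z i * I i * Real.exp (-(z i) * Φ₂ x) / ∫ y in Ω, Real.exp (-(z i) * Φ₂ y))
    (hbc : ∀ x ∈ frontier Ω, Φ₁ x = Φ₂ x) :
    ∀ x ∈ closure Ω, Φ₁ x ≤ Φ₂ x := by
  have hKcomp : IsCompact (closure Ω) := hΩ_bdd.isCompact_closure
  have hKne : (closure Ω).Nonempty := hΩ_ne.closure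
  have hΩK : Ω ⊆ closure Ω := subset_closure
  set w : EuclideanSpace ℝ (Fin 2) → ℝ := fun x => Φ₁ x - Φ₂ x with hw
  have hw_cont : ContinuousOn w (closure Ω) := hΦ₁_cont.sub hΦ₂_cont
  obtain ⟨x₀, hx₀K, hx₀max⟩ := hKcomp.exists_isMaxOn hKne hw_cont
  set M := w x₀ with hM
  rcases le_or_gt M 0 with hM0 | hM0
  · intro x hx
    have h1 : Φ₁ x - Φ₂ x ≤ M := hx₀max hx
    linarith
  · exfalso
    have hx₀Ω : x₀ ∈ Ω := by
      rcases (closure_eq_self_union_frontier Ω ▸ hx₀K) with h | h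
      · exact h
      · have hz0 : Φ₁ x₀ - Φ₂ x₀ = 0 := by rw [hbc x₀ h]; ring
        have hz1 : M = Φ₁ x₀ - Φ₂ x₀ := hM
        linarith
    have hmeas : MeasurableSet Ω := hΩ_open.measurableSet
    have hμfin : volume Ω ≠ ⊤ := hΩ_bdd.measure_lt_top.ne
    have hμpos : 0 < (volume Ω).toReal :=
      ENNReal.toReal_pos (hΩ_open.measure_pos volume hΩ_ne).ne' hμfin
    have hint : ∀ (z₀ : ℝ) {Φ : EuclideanSpace ℝ (Fin 2) → ℝ}, ContinuousOn Φ (closure Ω) →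
        IntegrableOn (fun y => Real.exp (-z₀ * Φ y)) Ω := by
      intro z₀ Φ hΦ
      have hc : ContinuousOn (fun y => Real.exp (-z₀ * Φ y)) (closure Ω) :=
        Real.continuous_exp.comp_continuousOn (continuousOn_const.mul hΦ)
      exact (hc.integrableOn_compact hKcomp).mono_set subset_closure
    have hApos : ∀ (z₀ : ℝ) {Φ : EuclideanSpace ℝ (Fin 2) → ℝ}, ContinuousOn Φ (closure Ω) →
        0 < ∫ y in Ω, Real.exp (-z₀ * Φ y) := by
      intro z₀ Φ hΦ
      have hc : ContinuousOn (fun y => Real.exp (-z₀ * Φ y)) (closure Ω) :=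
        Real.continuous_exp.comp_continuousOn (continuousOn_const.mul hΦ)
      obtain ⟨p, hpK, hpmin⟩ := hKcomp.exists_isMinOn hKne hc
      have hcle : ∀ x ∈ Ω, Real.exp (-z₀ * Φ p) ≤ Real.exp (-z₀ * Φ x) :=
        fun x hx => hpmin (hΩK hx)
      have hge := setIntegral_ge_of_const_le hmeas hμfin hcle (hint z₀ hΦ)
      calc (0:ℝ) < Real.exp (-z₀ * Φ p) * (volume Ω).toReal := by positivity
        _ ≤ _ := by rw [smul_eq_mul, mul_comm] at hge; exact hge
    have hA₁ : ∀ i, 0 < ∫ y in Ω, Real.exp (-(z i) * Φ₁ y) := fun i => hApos (z i) hΦ₁_cont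
    have hA₂ : ∀ i, 0 < ∫ y in Ω, Real.exp (-(z i) * Φ₂ y) := fun i => hApos (z i) hΦ₂_cont
    -- Laplacian comparison at the interior maximum
    have hc1 : ContDiffAt ℝ 2 Φ₁ x₀ := hΦ₁_smooth.contDiffAt (hΩ_open.mem_nhds hx₀Ω)
    have hc2 : ContDiffAt ℝ 2 Φ₂ x₀ := hΦ₂_smooth.contDiffAt (hΩ_open.mem_nhds hx₀Ω)
    have hlocmax : IsLocalMax w x₀ :=
      hx₀max.isLocalMax (mem_of_superset (hΩ_open.mem_nhds hx₀Ω) hΩK)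
    have hlapdiff : laplacian Φ₁ x₀ - laplacian Φ₂ x₀ ≤ 0 := by
      rw [← laplacian_sub hc1 hc2]
      exact laplacian_nonpos_of_isLocalMax (hc1.sub hc2) hlocmax
    have hΦeq : Φ₁ x₀ = Φ₂ x₀ + M := by
      have hz1 : M = Φ₁ x₀ - Φ₂ x₀ := hM
      linarith
    have hle_all : ∀ y ∈ Ω, Φ₁ y ≤ Φ₂ y + M := by
      intro y hy
      have h1 : Φ₁ y - Φ₂ y ≤ M := hx₀max (hΩK hy)
      linarith
    -- pointwise exponential comparisons
    have hcomp_pos : ∀ i, 0 < z i →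
        Real.exp (-(z i) * M) * ∫ y in Ω, Real.exp (-(z i) * Φ₂ y) ≤
          ∫ y in Ω, Real.exp (-(z i) * Φ₁ y) := by
      intro i hzi
      have hpt : ∀ y ∈ Ω,
          Real.exp (-(z i) * M) * Real.exp (-(z i) * Φ₂ y) ≤ Real.exp (-(z i) * Φ₁ y) := by
        intro y hy
        rw [← Real.exp_add]
        apply Real.exp_le_exp.mpr
        have := hle_all y hy
        nlinarith
      calc Real.exp (-(z i) * M) * ∫ y in Ω, Real.exp (-(z i) * Φ₂ y)
          = ∫ y in Ω, Real.exp (-(z i) * M) * Real.exp (-(z i) * Φ₂ y) := by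
            rw [integral_const_mul]
        _ ≤ ∫ y in Ω, Real.exp (-(z i) * Φ₁ y) :=
            setIntegral_mono_on ((hint (z i) hΦ₂_cont).const_mul _)
              (hint (z i) hΦ₁_cont) hmeas hpt
    have hcomp_neg : ∀ i, z i < 0 →
        (∫ y in Ω, Real.exp (-(z i) * Φ₁ y)) ≤
          Real.exp (-(z i) * M) * ∫ y in Ω, Real.exp (-(z i) * Φ₂ y) := by
      intro i hzi
      have hpt : ∀ y ∈ Ω,
          Real.exp (-(z i) * Φ₁ y) ≤ Real.exp (-(z i) * M) * Real.exp (-(z i) * Φ₂ y) := by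
        intro y hy
        rw [← Real.exp_add]
        apply Real.exp_le_exp.mpr
        have := hle_all y hy
        nlinarith
      calc (∫ y in Ω, Real.exp (-(z i) * Φ₁ y))
          ≤ ∫ y in Ω, Real.exp (-(z i) * M) * Real.exp (-(z i) * Φ₂ y) :=
            setIntegral_mono_on (hint (z i) hΦ₁_cont)
              ((hint (z i) hΦ₂_cont).const_mul _) hmeas hpt
        _ = Real.exp (-(z i) * M) * ∫ y in Ω, Real.exp (-(z i) * Φ₂ y) := by
            rw [integral_const_mul]
    -- the termwise differences
    set T : Fin N → ℝ := fun i =>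
      z i * I i * Real.exp (-(z i) * Φ₁ x₀) / (∫ y in Ω, Real.exp (-(z i) * Φ₁ y)) -
      z i * I i * Real.exp (-(z i) * Φ₂ x₀) / (∫ y in Ω, Real.exp (-(z i) * Φ₂ y)) with hT
    have hsum0 : 0 ≤ ∑ i, T i := by
      have h1 := hpde₁ x₀ hx₀Ω
      have h2 := hpde₂ x₀ hx₀Ω
      have hsplit : ∑ i, T i = -ε * laplacian Φ₁ x₀ - -ε * laplacian Φ₂ x₀ := by
        rw [h1, h2, ← Finset.sum_sub_distrib]
      rw [hsplit]
      nlinarith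
    have hTnonpos : ∀ i, T i ≤ 0 := by
      intro i
      rcases lt_trichotomy (z i) 0 with hzi | hzi | hzi
      · have hc := hcomp_neg i hzi
        have hdiv : Real.exp (-(z i) * Φ₂ x₀) / (∫ y in Ω, Real.exp (-(z i) * Φ₂ y)) ≤
            Real.exp (-(z i) * Φ₁ x₀) / (∫ y in Ω, Real.exp (-(z i) * Φ₁ y)) := by
          rw [hΦeq, show -(z i) * (Φ₂ x₀ + M) = -(z i) * M + -(z i) * Φ₂ x₀ by ring,
            Real.exp_add, div_le_div_iff₀ (hA₂ i) (hA₁ i)]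
          have e2pos : (0:ℝ) < Real.exp (-(z i) * Φ₂ x₀) := Real.exp_pos _
          nlinarith
        have hzI : z i * I i < 0 := mul_neg_of_neg_of_pos hzi (hI i)
        have hfac : T i = z i * I i *
            (Real.exp (-(z i) * Φ₁ x₀) / (∫ y in Ω, Real.exp (-(z i) * Φ₁ y)) -
             Real.exp (-(z i) * Φ₂ x₀) / (∫ y in Ω, Real.exp (-(z i) * Φ₂ y))) := by
          rw [hT]; ring
        rw [hfac]
        have : 0 ≤ Real.exp (-(z i) * Φ₁ x₀) / (∫ y in Ω, Real.exp (-(z i) * Φ₁ y)) -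
             Real.exp (-(z i) * Φ₂ x₀) / (∫ y in Ω, Real.exp (-(z i) * Φ₂ y)) := by linarith
        nlinarith
      · rw [hT]
        simp [hzi]
      · have hc := hcomp_pos i hzi
        have hdiv : Real.exp (-(z i) * Φ₁ x₀) / (∫ y in Ω, Real.exp (-(z i) * Φ₁ y)) ≤
            Real.exp (-(z i) * Φ₂ x₀) / (∫ y in Ω, Real.exp (-(z i) * Φ₂ y)) := by
          rw [hΦeq, show -(z i) * (Φ₂ x₀ + M) = -(z i) * M + -(z i) * Φ₂ x₀ by ring,
            Real.exp_add, div_le_div_iff₀ (hA₁ i) (hA₂ i)]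
          have e2pos : (0:ℝ) < Real.exp (-(z i) * Φ₂ x₀) := Real.exp_pos _
          nlinarith
        have hzI : 0 < z i * I i := mul_pos hzi (hI i)
        have hfac : T i = z i * I i *
            (Real.exp (-(z i) * Φ₁ x₀) / (∫ y in Ω, Real.exp (-(z i) * Φ₁ y)) -
             Real.exp (-(z i) * Φ₂ x₀) / (∫ y in Ω, Real.exp (-(z i) * Φ₂ y))) := by
          rw [hT]; ring
        rw [hfac]
        nlinarith
    have hTzero : ∀ i, T i = 0 := by
      have hsumle : ∑ i, T i ≤ 0 := Finset.sum_nonpos fun i _ => hTnonpos i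
      have hsum : ∑ i, T i = 0 := le_antisymm hsumle hsum0
      intro i
      exact (Finset.sum_eq_zero_iff_of_nonpos (fun j _ => hTnonpos j)).mp hsum i
        (Finset.mem_univ i)
    by_cases hz : ∀ i, z i = 0
    · -- harmonic case
      have hlap₁ : ∀ x ∈ Ω, laplacian Φ₁ x = 0 := by
        intro x hx
        have h := hpde₁ x hx
        have hzero : (∑ i, z i * I i * Real.exp (-(z i) * Φ₁ x) /
            ∫ y in Ω, Real.exp (-(z i) * Φ₁ y)) = 0 :=
          Finset.sum_eq_zero fun i _ => by rw [hz i]; simp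
        rw [hzero] at h
        have hne : -ε ≠ 0 := by linarith
        exact (mul_eq_zero.mp h).resolve_left hne
      have hlap₂ : ∀ x ∈ Ω, laplacian Φ₂ x = 0 := by
        intro x hx
        have h := hpde₂ x hx
        have hzero : (∑ i, z i * I i * Real.exp (-(z i) * Φ₂ x) /
            ∫ y in Ω, Real.exp (-(z i) * Φ₂ y)) = 0 :=
          Finset.sum_eq_zero fun i _ => by rw [hz i]; simp
        rw [hzero] at h
        have hne : -ε ≠ 0 := by linarith
        exact (mul_eq_zero.mp h).resolve_left hne
      obtain ⟨pq, hpqK, hpqmax⟩ := hKcomp.exists_isMaxOn hKne qf_continuous.continuousOn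
      set C := qf pq with hC
      have hC0 : 0 ≤ C := le_trans (qf_nonneg x₀) (hpqmax hx₀K)
      set δ := M / (C + 1) with hδ
      have hδpos : 0 < δ := div_pos hM0 (by linarith)
      set v : EuclideanSpace ℝ (Fin 2) → ℝ := fun x => w x + δ * qf x with hv
      have hv_cont : ContinuousOn v (closure Ω) :=
        hw_cont.add (continuousOn_const.mul qf_continuous.continuousOn)
      obtain ⟨x₁, hx₁K, hx₁max⟩ := hKcomp.exists_isMaxOn hKne hv_cont
      have hvlb : M ≤ v x₁ := by
        have h2 : M + δ * qf x₀ ≤ v x₁ := hx₁max hx₀K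
        nlinarith [qf_nonneg x₀, hδpos]
      rcases (closure_eq_self_union_frontier Ω ▸ hx₁K) with hx₁Ω | hx₁f
      · have hwc2 : ContDiffAt ℝ 2 w x₁ :=
          (hΦ₁_smooth.contDiffAt (hΩ_open.mem_nhds hx₁Ω)).sub
            (hΦ₂_smooth.contDiffAt (hΩ_open.mem_nhds hx₁Ω))
        have hqc2 : ContDiffAt ℝ 2 (fun y => δ * qf y) x₁ :=
          contDiffAt_const.mul qf_contDiff.contDiffAt
        have hvmax : IsLocalMax v x₁ :=
          hx₁max.isLocalMax (mem_of_superset (hΩ_open.mem_nhds hx₁Ω) hΩK)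
        have hlapv : laplacian v x₁ ≤ 0 :=
          laplacian_nonpos_of_isLocalMax (hwc2.add hqc2) hvmax
        have hsplit : laplacian v x₁ = laplacian w x₁ + δ * laplacian qf x₁ := by
          rw [hv]
          rw [laplacian_add hwc2 hqc2, laplacian_const_mul δ qf_contDiff.contDiffAt]
        have hlapw : laplacian w x₁ = 0 := by
          rw [hw]
          rw [laplacian_sub (hΦ₁_smooth.contDiffAt (hΩ_open.mem_nhds hx₁Ω))
            (hΦ₂_smooth.contDiffAt (hΩ_open.mem_nhds hx₁Ω)),
            hlap₁ x₁ hx₁Ω, hlap₂ x₁ hx₁Ω]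
          ring
        have hlapq : laplacian (qf (d := 2)) x₁ = 4 := by
          rw [laplacian_qf]; norm_num
        rw [hsplit, hlapw, hlapq] at hlapv
        nlinarith
      · have hw0 : Φ₁ x₁ - Φ₂ x₁ = 0 := by rw [hbc x₁ hx₁f]; ring
        have hv1 : v x₁ = δ * qf x₁ := by
          have : v x₁ = Φ₁ x₁ - Φ₂ x₁ + δ * qf x₁ := rfl
          rw [this, hw0]; ring
        have hqle : qf x₁ ≤ C := hpqmax hx₁K
        have hvub : v x₁ ≤ δ * C := by
          rw [hv1]
          nlinarith
        have hlt : δ * C < M := by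
          rw [hδ, div_mul_eq_mul_div, div_lt_iff₀ (by linarith : (0:ℝ) < C + 1)]
          nlinarith
        linarith
    · push_neg at hz
      obtain ⟨i₀, hi₀⟩ := hz
      have hzI₀ : z i₀ * I i₀ ≠ 0 := mul_ne_zero hi₀ (hI i₀).ne'
      have hdiveq : Real.exp (-(z i₀) * Φ₁ x₀) / (∫ y in Ω, Real.exp (-(z i₀) * Φ₁ y)) =
          Real.exp (-(z i₀) * Φ₂ x₀) / (∫ y in Ω, Real.exp (-(z i₀) * Φ₂ y)) := by
        have h0 := hTzero i₀
        rw [hT] at h0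
        have h1 : z i₀ * I i₀ *
            (Real.exp (-(z i₀) * Φ₁ x₀) / (∫ y in Ω, Real.exp (-(z i₀) * Φ₁ y)) -
             Real.exp (-(z i₀) * Φ₂ x₀) / (∫ y in Ω, Real.exp (-(z i₀) * Φ₂ y))) = 0 := by
          rw [← h0]; ring
        rcases mul_eq_zero.mp h1 with h | h
        · exact absurd h hzI₀
        · linarith [sub_eq_zero.mp h]
      have hAeq : (∫ y in Ω, Real.exp (-(z i₀) * Φ₁ y)) =
          Real.exp (-(z i₀) * M) * ∫ y in Ω, Real.exp (-(z i₀) * Φ₂ y) := by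
        have e2pos : (0:ℝ) < Real.exp (-(z i₀) * Φ₂ x₀) := Real.exp_pos _
        have h1 : Real.exp (-(z i₀) * Φ₁ x₀) =
            Real.exp (-(z i₀) * M) * Real.exp (-(z i₀) * Φ₂ x₀) := by
          rw [hΦeq, ← Real.exp_add]; ring_nf
        rw [h1] at hdiveq
        rw [div_eq_div_iff (hA₁ i₀).ne' (hA₂ i₀).ne'] at hdiveq
        have := hA₂ i₀
        nlinarith [hdiveq]
      -- pointwise equality Φ₁ = Φ₂ + M on Ω
      have hexp_cont₁ : ContinuousOn (fun y => Real.exp (-(z i₀) * Φ₁ y)) (closure Ω) :=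
        Real.continuous_exp.comp_continuousOn (continuousOn_const.mul hΦ₁_cont)
      have hexp_cont₂ : ContinuousOn (fun y => Real.exp (-(z i₀) * Φ₂ y)) (closure Ω) :=
        Real.continuous_exp.comp_continuousOn (continuousOn_const.mul hΦ₂_cont)
      have hexp_eq : ∀ y ∈ Ω,
          Real.exp (-(z i₀) * Φ₁ y) = Real.exp (-(z i₀) * M) * Real.exp (-(z i₀) * Φ₂ y) := by
        rcases lt_or_gt_of_ne hi₀ with hzi | hzi
        · -- z i₀ < 0 : G := exp(-zM)exp(-zΦ₂) - exp(-zΦ₁) ≥ 0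
          have key : ∀ y ∈ Ω,
              Real.exp (-(z i₀) * M) * Real.exp (-(z i₀) * Φ₂ y) -
                Real.exp (-(z i₀) * Φ₁ y) = 0 := by
            apply eq_zero_on_of_integral_eq_zero hΩ_open
            · intro y hy
              apply ContinuousAt.sub
              · exact (continuousOn_const.mul hexp_cont₂).continuousAt
                  (mem_nhds_iff.mpr ⟨Ω, fun a ha => hΩK ha, hΩ_open, hy⟩)
              · exact hexp_cont₁.continuousAt
                  (mem_nhds_iff.mpr ⟨Ω, fun a ha => hΩK ha, hΩ_open, hy⟩)
            · intro y hy
              have hle := hle_all y hy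
              have hmul : -(z i₀) * Φ₁ y ≤ -(z i₀) * M + -(z i₀) * Φ₂ y := by
                nlinarith [mul_nonneg (neg_pos.mpr hzi).le
                  (show (0:ℝ) ≤ Φ₂ y + M - Φ₁ y by linarith)]
              have hexp := Real.exp_le_exp.mpr hmul
              rw [Real.exp_add] at hexp
              linarith
            · exact ((hint (z i₀) hΦ₂_cont).const_mul _).sub (hint (z i₀) hΦ₁_cont)
            · rw [integral_sub ((hint (z i₀) hΦ₂_cont).const_mul _) (hint (z i₀) hΦ₁_cont),
                integral_const_mul, hAeq]
              ring
          intro y hy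
          have := key y hy
          linarith
        · have key : ∀ y ∈ Ω,
              Real.exp (-(z i₀) * Φ₁ y) -
                Real.exp (-(z i₀) * M) * Real.exp (-(z i₀) * Φ₂ y) = 0 := by
            apply eq_zero_on_of_integral_eq_zero hΩ_open
            · intro y hy
              apply ContinuousAt.sub
              · exact hexp_cont₁.continuousAt
                  (mem_nhds_iff.mpr ⟨Ω, fun a ha => hΩK ha, hΩ_open, hy⟩)
              · exact (continuousOn_const.mul hexp_cont₂).continuousAt
                  (mem_nhds_iff.mpr ⟨Ω, fun a ha => hΩK ha, hΩ_open, hy⟩)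
            · intro y hy
              have hle := hle_all y hy
              have hmul : -(z i₀) * M + -(z i₀) * Φ₂ y ≤ -(z i₀) * Φ₁ y := by
                nlinarith [mul_nonneg hzi.le
                  (show (0:ℝ) ≤ Φ₂ y + M - Φ₁ y by linarith)]
              have hexp := Real.exp_le_exp.mpr hmul
              rw [Real.exp_add] at hexp
              linarith
            · exact (hint (z i₀) hΦ₁_cont).sub ((hint (z i₀) hΦ₂_cont).const_mul _)
            · rw [integral_sub (hint (z i₀) hΦ₁_cont) ((hint (z i₀) hΦ₂_cont).const_mul _),
                integral_const_mul, hAeq]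
              ring
          intro y hy
          have := key y hy
          linarith
      have hptwise : ∀ y ∈ Ω, w y = M := by
        intro y hy
        have h1 := hexp_eq y hy
        rw [← Real.exp_add] at h1
        have h2 : -(z i₀) * Φ₁ y = -(z i₀) * M + -(z i₀) * Φ₂ y := Real.exp_injective h1
        have h3 : z i₀ * (Φ₁ y - Φ₂ y - M) = 0 := by linarith
        have h4 : Φ₁ y - Φ₂ y - M = 0 := by
          rcases mul_eq_zero.mp h3 with h | h
          · exact absurd h hi₀
          · exact h
        show Φ₁ y - Φ₂ y = M
        linarith
      -- frontier contradiction
      obtain ⟨p, hp⟩ := frontier_nonempty_of_bounded hΩ_open hΩ_bdd hΩ_ne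
      have hpK : p ∈ closure Ω := frontier_subset_closure hp
      have hnb : (𝓝[Ω] p).NeBot := mem_closure_iff_nhdsWithin_neBot.mp hpK
      have ht1 : Tendsto w (𝓝[Ω] p) (𝓝 (w p)) :=
        (hw_cont p hpK).mono_left (nhdsWithin_mono p hΩK)
      have ht2 : Tendsto w (𝓝[Ω] p) (𝓝 M) := by
        have heq : w =ᶠ[𝓝[Ω] p] fun _ => M := by
          filter_upwards [self_mem_nhdsWithin] with y hy
          exact hptwise y hy
        exact Tendsto.congr' heq.symm tendsto_const_nhds
      have hwp : w p = M := tendsto_nhds_unique ht1 ht2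
      have hwp0 : w p = 0 := by
        show Φ₁ p - Φ₂ p = 0
        rw [hbc p hp]; ring
      linarith

end Key

/-- Uniqueness for the nonlocal Poisson–Boltzmann equation (blocking boundary
conditions) in two dimensions: two classical solutions with square-integrable
gradients and the same Dirichlet boundary values coincide on the closure of `Ω`. -/
theorem poisson_boltzmann_nonlocal_uniqueness
    (Ω : Set (EuclideanSpace ℝ (Fin 2))) (hΩ_open : IsOpen Ω)
    (hΩ_bdd : Bornology.IsBounded Ω) (hΩ_ne : Ω.Nonempty)
    (ε : ℝ) (hε : 0 < ε) (N : ℕ) (hN : 1 ≤ N)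
    (z I : Fin N → ℝ) (hI : ∀ i, 0 < I i)
    (Φ₁ Φ₂ : EuclideanSpace ℝ (Fin 2) → ℝ)
    (hΦ₁_cont : ContinuousOn Φ₁ (closure Ω)) (hΦ₂_cont : ContinuousOn Φ₂ (closure Ω))
    (hΦ₁_smooth : ContDiffOn ℝ 2 Φ₁ Ω) (hΦ₂_smooth : ContDiffOn ℝ 2 Φ₂ Ω)
    (hΦ₁_grad : IntegrableOn (fun x => ‖fderiv ℝ Φ₁ x‖ ^ 2) Ω)
    (hΦ₂_grad : IntegrableOn (fun x => ‖fderiv ℝ Φ₂ x‖ ^ 2) Ω)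
    (hpde₁ : ∀ x ∈ Ω, -ε * laplacian Φ₁ x =
      ∑ i, z i * I i * Real.exp (-(z i) * Φ₁ x) / ∫ y in Ω, Real.exp (-(z i) * Φ₁ y))
    (hpde₂ : ∀ x ∈ Ω, -ε * laplacian Φ₂ x =
      ∑ i, z i * I i * Real.exp (-(z i) * Φ₂ x) / ∫ y in Ω, Real.exp (-(z i) * Φ₂ y))
    (hbc : ∀ x ∈ frontier Ω, Φ₁ x = Φ₂ x) :
    ∀ x ∈ closure Ω, Φ₁ x = Φ₂ x := by
  intro x hx
  have h1 := key_le Ω hΩ_open hΩ_bdd hΩ_ne ε hε N z I hI Φ₁ Φ₂ hΦ₁_cont hΦ₂_cont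
    hΦ₁_smooth hΦ₂_smooth hpde₁ hpde₂ hbc x hx
  have h2 := key_le Ω hΩ_open hΩ_bdd hΩ_ne ε hε N z I hI Φ₂ Φ₁ hΦ₂_cont hΦ₁_cont
    hΦ₂_smooth hΦ₁_smooth hpde₂ hpde₁ (fun x hx => (hbc x hx).symm) x hx
  linarith
end

section
/- Let N ≥ 1, z_1, …, z_N ∈ ℝ, Z_1, …, Z_N > 0 with Σ_{i=1}^N z_i/Z_i = 0, and set G(Φ) = Σ_{i=1}^N Z_i^{−1} e^{−z_iΦ}. Let ε > 0, H > 0 and W > 0. Then there exists a twice continuously differentiable function Φ : [0, H] → ℝ such that ε·Φ″(y) = G′(Φ(y)) for all y ∈ [0, H], Φ(0) = 0, Φ(H) = W, and Φ is strictly increasing (so in particular 0 ≤ Φ(y) ≤ W on [0, H]). -/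
open Set

lemma pb_aux (k : ℝ → ℝ) (hkc : Continuous k)
    (hknn : ∀ x, 0 ≤ k x) (H W c : ℝ) (hH : 0 < H) (hW : 0 < W) (hc : 0 < c)
    (hquad : ∀ x ∈ Icc (0:ℝ) W, k x ≤ c ^ 2 * x ^ 2) :
    ∃ Φ : ℝ → ℝ, ∃ α : ℝ, 0 < α ∧ Φ 0 = 0 ∧ Φ H = W ∧ StrictMonoOn Φ (Icc 0 H) ∧
      ∀ y ∈ Icc (0:ℝ) H, HasDerivAt Φ (Real.sqrt (k (Φ y) + α ^ 2)) y := by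
  classical
  set h : ℝ → ℝ → ℝ := fun α x => (Real.sqrt (k x + α ^ 2))⁻¹ with hh_def
  have hpos : ∀ α : ℝ, 0 < α → ∀ x, 0 < k x + α ^ 2 := fun α hα x =>
    add_pos_of_nonneg_of_pos (hknn x) (pow_pos hα 2)
  have hsqrt_pos : ∀ α : ℝ, 0 < α → ∀ x, 0 < Real.sqrt (k x + α ^ 2) := fun α hα x =>
    Real.sqrt_pos.2 (hpos α hα x)
  have hh_pos : ∀ α : ℝ, 0 < α → ∀ x, 0 < h α x := fun α hα x =>
    inv_pos.2 (hsqrt_pos α hα x)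
  have hh_cont : ∀ α : ℝ, 0 < α → Continuous (h α) := by
    intro α hα
    exact ((hkc.add continuous_const).sqrt).inv₀ fun x => (hsqrt_pos α hα x).ne'
  have hh_int : ∀ α : ℝ, 0 < α → ∀ a b : ℝ, IntervalIntegrable (h α) MeasureTheory.volume a b :=
    fun α hα a b => (hh_cont α hα).intervalIntegrable a b
  set P : ℝ → ℝ → ℝ := fun α φ => ∫ t in (0:ℝ)..φ, h α t with hP_def
  have hPd : ∀ α : ℝ, 0 < α → ∀ φ, HasDerivAt (P α) (h α φ) φ := by
    intro α hα φ
    exact intervalIntegral.integral_hasDerivAt_right (hh_int α hα 0 φ)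
      ((hh_cont α hα).stronglyMeasurable.stronglyMeasurableAtFilter)
      (hh_cont α hα).continuousAt
  have hPmono : ∀ α : ℝ, 0 < α → StrictMono (P α) := by
    intro α hα
    apply strictMono_of_deriv_pos
    intro x
    rw [(hPd α hα x).deriv]
    exact hh_pos α hα x
  -- upper bound for the integral
  have hIle : ∀ α : ℝ, 0 < α → P α W ≤ W * α⁻¹ := by
    intro α hα
    have hb : ∀ t ∈ Icc (0:ℝ) W, h α t ≤ α⁻¹ := by
      intro t _
      have h1 : α = Real.sqrt (α ^ 2) := by
        rw [Real.sqrt_sq hα.le]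
      have h2 : Real.sqrt (α ^ 2) ≤ Real.sqrt (k t + α ^ 2) :=
        Real.sqrt_le_sqrt (by linarith [hknn t])
      rw [hh_def]
      exact inv_anti₀ (by rw [h1] at hα ⊢; exact hα) (by rw [← h1] at h2; exact h2)
    calc P α W ≤ ∫ _ in (0:ℝ)..W, α⁻¹ :=
          intervalIntegral.integral_mono_on hW.le (hh_int α hα 0 W)
            intervalIntegrable_const hb
      _ = W * α⁻¹ := by simp
  -- lower bound for the integral
  have hIge : ∀ α : ℝ, 0 < α → α < W →
      (Real.sqrt (c ^ 2 + 1))⁻¹ * Real.log (W / α) ≤ P α W := by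
    intro α hα hαW
    have hsplit : P α W = (∫ t in (0:ℝ)..α, h α t) + ∫ t in α..W, h α t :=
      (intervalIntegral.integral_add_adjacent_intervals (hh_int α hα 0 α)
        (hh_int α hα α W)).symm
    have h1 : 0 ≤ ∫ t in (0:ℝ)..α, h α t :=
      intervalIntegral.integral_nonneg hα.le fun t _ => (hh_pos α hα t).le
    have hcc : ContinuousOn (fun t : ℝ => (Real.sqrt (c ^ 2 + 1) * t)⁻¹) (uIcc α W) := by
      apply ContinuousOn.inv₀ (Continuous.continuousOn (by fun_prop))
      intro t ht
      rw [uIcc_of_le hαW.le] at ht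
      have : 0 < t := lt_of_lt_of_le hα ht.1
      positivity
    have h2 : (∫ t in α..W, (Real.sqrt (c ^ 2 + 1) * t)⁻¹) ≤ ∫ t in α..W, h α t := by
      apply intervalIntegral.integral_mono_on hαW.le (hcc.intervalIntegrable)
        (hh_int α hα α W)
      intro t ht
      have ht0 : 0 < t := lt_of_lt_of_le hα ht.1
      have hk1 : k t + α ^ 2 ≤ (c ^ 2 + 1) * t ^ 2 := by
        have := hquad t ⟨ht0.le, ht.2⟩
        nlinarith [ht.1, hα]
      have h3 : Real.sqrt (k t + α ^ 2) ≤ Real.sqrt (c ^ 2 + 1) * t := by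
        have := Real.sqrt_le_sqrt hk1
        rwa [Real.sqrt_mul (by positivity) (t ^ 2), Real.sqrt_sq ht0.le] at this
      rw [hh_def]
      exact inv_anti₀ (hsqrt_pos α hα t) h3
    have h4 : (∫ t in α..W, (Real.sqrt (c ^ 2 + 1) * t)⁻¹)
        = (Real.sqrt (c ^ 2 + 1))⁻¹ * Real.log (W / α) := by
      have : ∀ t : ℝ, (Real.sqrt (c ^ 2 + 1) * t)⁻¹ = (Real.sqrt (c ^ 2 + 1))⁻¹ * t⁻¹ := by
        intro t; rw [mul_inv]
      simp_rw [this]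
      rw [intervalIntegral.integral_const_mul, integral_inv_of_pos hα (by linarith)]
    linarith [hsplit, h1, h2, h4]
  -- continuity of the integral in α
  have hIcont : ∀ α₀ : ℝ, 0 < α₀ → ContinuousAt (fun α => P α W) α₀ := by
    intro α₀ hα₀
    apply intervalIntegral.continuousAt_of_dominated_interval
      (bound := fun _ => (α₀ / 2)⁻¹)
    · filter_upwards with α
      exact (((hkc.add continuous_const).sqrt).measurable.inv).aestronglyMeasurable
    · have hev : ∀ᶠ α in nhds α₀, α₀ / 2 < α := eventually_gt_nhds (by linarith)
      filter_upwards [hev] with α hα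
      filter_upwards with t _
      have hαp : 0 < α := lt_trans (by linarith) hα
      have h1 : Real.sqrt (α ^ 2) ≤ Real.sqrt (k t + α ^ 2) :=
        Real.sqrt_le_sqrt (by linarith [hknn t])
      rw [Real.sqrt_sq hαp.le] at h1
      have h2 : h α t ≤ α⁻¹ := inv_anti₀ hαp h1
      rw [Real.norm_eq_abs, abs_of_pos (hh_pos α hαp t)]
      exact h2.trans (inv_anti₀ (by linarith) hα.le)
    · exact intervalIntegrable_const
    · filter_upwards with t _
      have : Continuous fun α : ℝ => Real.sqrt (k t + α ^ 2) := by fun_prop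
      exact (this.continuousAt).inv₀ (hsqrt_pos α₀ hα₀ t).ne'
  -- choose α by the intermediate value theorem
  set c' : ℝ := Real.sqrt (c ^ 2 + 1) with hc'_def
  have hc'pos : 0 < c' := Real.sqrt_pos.2 (by positivity)
  set α₀ : ℝ := W * Real.exp (-((H + 1) * c')) with hα₀_def
  have hα₀pos : 0 < α₀ := by positivity
  have hα₀W : α₀ < W := by
    have : Real.exp (-((H + 1) * c')) < 1 := by
      rw [Real.exp_lt_one_iff]
      nlinarith
    nlinarith
  have hlog : Real.log (W / α₀) = (H + 1) * c' := by
    rw [hα₀_def]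
    rw [show W / (W * Real.exp (-((H + 1) * c'))) = (Real.exp (-((H + 1) * c')))⁻¹ by
      field_simp]
    rw [← Real.exp_neg, Real.log_exp, neg_neg]
  have hI₀ : H < P α₀ W := by
    have := hIge α₀ hα₀pos hα₀W
    rw [hlog] at this
    have h5 : c'⁻¹ * ((H + 1) * c') = H + 1 := by field_simp
    rw [h5] at this
    linarith
  set α₁ : ℝ := α₀ + 2 * W / H with hα₁_def
  have hα₁pos : 0 < α₁ := by positivity
  have hI₁ : P α₁ W < H := by
    have h6 := hIle α₁ hα₁pos
    have e : H * α₁ = H * α₀ + 2 * W := by rw [hα₁_def]; field_simp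
    have h8 : W < H * α₁ := by linarith [mul_pos hH hα₀pos]
    have h7 : W * α₁⁻¹ < H := by
      rw [← div_eq_mul_inv, div_lt_iff₀ hα₁pos]
      linarith
    linarith
  have hα₀₁ : α₀ ≤ α₁ := by
    rw [hα₁_def]
    have : 0 ≤ 2 * W / H := by positivity
    linarith
  have hIVT : ∃ α ∈ Icc α₀ α₁, P α W = H := by
    have hsub : Icc (P α₁ W) (P α₀ W) ⊆ (fun α => P α W) '' Icc α₀ α₁ :=
      intermediate_value_Icc' hα₀₁ (fun α hα =>
        (hIcont α (lt_of_lt_of_le hα₀pos hα.1)).continuousWithinAt)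
    obtain ⟨α, hmem, hval⟩ := hsub ⟨hI₁.le, hI₀.le⟩
    exact ⟨α, hmem, hval⟩
  obtain ⟨α, hαmem, hαval⟩ := hIVT
  have hαpos : 0 < α := lt_of_lt_of_le hα₀pos hαmem.1
  -- the solution as inverse function
  set Q : ℝ → ℝ := P α with hQ_def
  have hQmono : StrictMono Q := hPmono α hαpos
  have hQcont : Continuous Q := by
    rw [continuous_iff_continuousAt]
    exact fun x => (hPd α hαpos x).continuousAt
  have hQ0 : Q 0 = 0 := intervalIntegral.integral_same
  have hQW : Q W = H := hαval
  set Φ : ℝ → ℝ := Function.invFun Q with hΦ_def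
  have hlinv : ∀ x, Φ (Q x) = x := fun x =>
    Function.leftInverse_invFun hQmono.injective x
  set s : Set ℝ := Ioo (Q (-1)) (Q (W + 1)) with hs_def
  have hs_open : IsOpen s := isOpen_Ioo
  have hIccs : Icc (0:ℝ) H ⊆ s := by
    intro y hy
    constructor
    · calc Q (-1) < Q 0 := hQmono (by norm_num)
        _ = 0 := hQ0
        _ ≤ y := hy.1
    · calc y ≤ H := hy.2
        _ = Q W := hQW.symm
        _ < Q (W + 1) := hQmono (by norm_num)
  have hsurj : ∀ y ∈ s, ∃ x ∈ Ioo (-1:ℝ) (W + 1), Q x = y := by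
    intro y hy
    have := intermediate_value_Ioo (by linarith : (-1:ℝ) ≤ W + 1) hQcont.continuousOn
    obtain ⟨x, hx, hQx⟩ := this hy
    exact ⟨x, hx, hQx⟩
  have hrinv : ∀ y ∈ s, Q (Φ y) = y := by
    intro y hy
    obtain ⟨x, _, hQx⟩ := hsurj y hy
    rw [← hQx, hlinv]
  have hΦmem : ∀ y ∈ s, Φ y ∈ Ioo (-1:ℝ) (W + 1) := by
    intro y hy
    obtain ⟨x, hx, hQx⟩ := hsurj y hy
    rw [← hQx, hlinv]
    exact hx
  have hΦmono : StrictMonoOn Φ s := by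
    intro y₁ h₁ y₂ h₂ h₁₂
    have e₁ := hrinv y₁ h₁
    have e₂ := hrinv y₂ h₂
    by_contra hcon
    push_neg at hcon
    have := hQmono.monotone hcon
    rw [e₁, e₂] at this
    exact absurd this (not_le.2 h₁₂)
  have himg : Ioo (-1:ℝ) (W + 1) ⊆ Φ '' s := by
    intro x hx
    refine ⟨Q x, ⟨hQmono hx.1, hQmono hx.2⟩, hlinv x⟩
  have hΦcont : ∀ y ∈ s, ContinuousAt Φ y := by
    intro y hy
    exact hΦmono.continuousAt_of_image_mem_nhds (hs_open.mem_nhds hy)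
      (Filter.mem_of_superset (isOpen_Ioo.mem_nhds (hΦmem y hy)) himg)
  have hΦderiv : ∀ y ∈ s, HasDerivAt Φ (Real.sqrt (k (Φ y) + α ^ 2)) y := by
    intro y hy
    have hev : ∀ᶠ y' in nhds y, Q (Φ y') = y' :=
      Filter.eventually_of_mem (hs_open.mem_nhds hy) hrinv
    have := HasDerivAt.of_local_left_inverse (hΦcont y hy) (hPd α hαpos (Φ y))
      (hh_pos α hαpos (Φ y)).ne' hev
    rwa [hh_def, inv_inv] at this
  refine ⟨Φ, α, hαpos, ?_, ?_, hΦmono.mono hIccs, fun y hy => hΦderiv y (hIccs hy)⟩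
  · have := hlinv 0; rwa [hQ0] at this
  · have := hlinv W; rwa [hQW] at this


/-- One-dimensional Poisson–Boltzmann construction: under the neutrality
condition `Σ z_i/Z_i = 0`, the two-point boundary value problem
`ε·Φ″ = G′(Φ)` on `[0, H]` with `Φ(0) = 0`, `Φ(H) = W > 0` has a twice
continuously differentiable, strictly increasing solution
(so in particular `0 ≤ Φ ≤ W` on `[0, H]`). -/
theorem poisson_boltzmann_one_dim
    (N : ℕ) (hN : 1 ≤ N) (z Z : Fin N → ℝ) (hZ : ∀ i, 0 < Z i)
    (hneutral : (∑ i, z i / Z i) = 0)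
    (G : ℝ → ℝ) (hG : G = fun φ => ∑ i, (Z i)⁻¹ * Real.exp (-(z i) * φ))
    (ε H W : ℝ) (hε : 0 < ε) (hH : 0 < H) (hW : 0 < W) :
    ∃ Φ Φ' Φ'' : ℝ → ℝ,
      (∀ y ∈ Icc 0 H, HasDerivAt Φ (Φ' y) y) ∧
      (∀ y ∈ Icc 0 H, HasDerivAt Φ' (Φ'' y) y) ∧
      ContinuousOn Φ'' (Icc 0 H) ∧
      (∀ y ∈ Icc 0 H, ε * Φ'' y = deriv G (Φ y)) ∧
      Φ 0 = 0 ∧ Φ H = W ∧ StrictMonoOn Φ (Icc 0 H) := by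
  classical
  set G1 : ℝ → ℝ := fun φ => ∑ i, (Z i)⁻¹ * (Real.exp (-z i * φ) * (-z i)) with hG1_def
  set G2 : ℝ → ℝ := fun φ => ∑ i, (Z i)⁻¹ * (Real.exp (-z i * φ) * (-z i) * (-z i))
    with hG2_def
  have hGd : ∀ φ, HasDerivAt G (G1 φ) φ := by
    intro φ
    rw [hG, hG1_def]
    apply HasDerivAt.fun_sum
    intro i _
    exact (((hasDerivAt_id φ).const_mul (-z i)).exp.const_mul ((Z i)⁻¹)).congr_deriv
      (by simp only [id_eq]; ring)
  have hG1d : ∀ φ, HasDerivAt G1 (G2 φ) φ := by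
    intro φ
    rw [hG1_def, hG2_def]
    apply HasDerivAt.fun_sum
    intro i _
    exact ((((hasDerivAt_id φ).const_mul (-z i)).exp.mul_const (-z i)).const_mul
      ((Z i)⁻¹)).congr_deriv (by simp only [id_eq]; ring)
  have hG10 : G1 0 = 0 := by
    rw [hG1_def]
    have : ∀ i : Fin N, (Z i)⁻¹ * (Real.exp (-z i * 0) * (-z i)) = -(z i / Z i) := by
      intro i
      rw [mul_zero, Real.exp_zero]
      field_simp
    simp only [this]
    rw [Finset.sum_neg_distrib, hneutral, neg_zero]
  have hG2nn : ∀ φ, 0 ≤ G2 φ := by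
    intro φ
    rw [hG2_def]
    apply Finset.sum_nonneg
    intro i _
    have : (Z i)⁻¹ * (Real.exp (-z i * φ) * (-z i) * (-z i))
        = (Z i)⁻¹ * (Real.exp (-z i * φ) * (z i) ^ 2) := by ring
    rw [this]
    have := (hZ i)
    positivity
  have hG1cont : Continuous G1 := by
    rw [continuous_iff_continuousAt]
    exact fun x => (hG1d x).continuousAt
  have hG2cont : Continuous G2 := by
    rw [hG2_def]
    apply continuous_finset_sum
    intro i _
    fun_prop
  have hG1mono : Monotone G1 :=
    monotone_of_deriv_nonneg (fun x => (hG1d x).differentiableAt) fun x => by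
      rw [(hG1d x).deriv]; exact hG2nn x
  have hGmin : ∀ x, G 0 ≤ G x := by
    intro x
    rcases le_or_gt 0 x with hx | hx
    · have hm : MonotoneOn G (Ici (0:ℝ)) := by
        apply monotoneOn_of_deriv_nonneg (convex_Ici 0)
          (fun t _ => (hGd t).continuousAt.continuousWithinAt)
          (fun t ht => ((hGd t).differentiableAt).differentiableWithinAt)
        intro t ht
        rw [interior_Ici] at ht
        rw [(hGd t).deriv]
        have := hG1mono (le_of_lt ht)
        rw [hG10] at this
        exact this
      exact hm (self_mem_Ici) hx hx
    · have hm : AntitoneOn G (Iic (0:ℝ)) := by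
        apply antitoneOn_of_deriv_nonpos (convex_Iic 0)
          (fun t _ => (hGd t).continuousAt.continuousWithinAt)
          (fun t ht => ((hGd t).differentiableAt).differentiableWithinAt)
        intro t ht
        rw [interior_Iic] at ht
        rw [(hGd t).deriv]
        have := hG1mono (le_of_lt ht)
        rw [hG10] at this
        exact this
      exact hm (le_of_lt hx : x ≤ 0) self_mem_Iic (le_of_lt hx)
  -- bound on G2 over [0, W]
  obtain ⟨xm, hxm_mem, hxm⟩ := isCompact_Icc.exists_isMaxOn (nonempty_Icc.2 hW.le)
    hG2cont.continuousOn
  set M : ℝ := G2 xm with hM_def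
  have hM : ∀ x ∈ Icc (0:ℝ) W, G2 x ≤ M := fun x hx => hxm hx
  have hMnn : 0 ≤ M := hG2nn xm
  have hG1le : ∀ x ∈ Icc (0:ℝ) W, G1 x ≤ M * x := by
    intro x hx
    set p : ℝ → ℝ := fun t => G1 t - M * t with hp_def
    have hpd : ∀ t, HasDerivAt p (G2 t - M) t := fun t =>
      (hG1d t).sub (((hasDerivAt_id t).const_mul M).congr_deriv (mul_one M))
    have hpa : AntitoneOn p (Icc (0:ℝ) W) := by
      apply antitoneOn_of_deriv_nonpos (convex_Icc 0 W)
        (fun t _ => (hpd t).continuousAt.continuousWithinAt)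
        (fun t ht => ((hpd t).differentiableAt).differentiableWithinAt)
      intro t ht
      rw [interior_Icc] at ht
      rw [(hpd t).deriv]
      have := hM t ⟨ht.1.le, ht.2.le⟩
      linarith
    have := hpa (left_mem_Icc.2 hW.le) hx hx.1
    rw [hp_def] at this
    simp only [mul_zero, sub_zero, hG10] at this
    linarith
  have hGle : ∀ x ∈ Icc (0:ℝ) W, G x - G 0 ≤ M / 2 * x ^ 2 := by
    intro x hx
    set q : ℝ → ℝ := fun t => G t - G 0 - M / 2 * t ^ 2 with hq_def
    have hqd : ∀ t, HasDerivAt q (G1 t - M * t) t := by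
      intro t
      have h1 : HasDerivAt (fun t : ℝ => M / 2 * t ^ 2) (M * t) t := by
        have := ((hasDerivAt_pow 2 t).const_mul (M / 2))
        refine this.congr_deriv ?_
        push_cast
        ring
      exact ((hGd t).sub_const (G 0)).sub h1
    have hqa : AntitoneOn q (Icc (0:ℝ) W) := by
      apply antitoneOn_of_deriv_nonpos (convex_Icc 0 W)
        (fun t _ => (hqd t).continuousAt.continuousWithinAt)
        (fun t ht => ((hqd t).differentiableAt).differentiableWithinAt)
      intro t ht
      rw [interior_Icc] at ht
      rw [(hqd t).deriv]
      have := hG1le t ⟨ht.1.le, ht.2.le⟩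
      linarith
    have := hqa (left_mem_Icc.2 hW.le) hx hx.1
    rw [hq_def] at this
    simp only [sub_self, ne_eq, OfNat.ofNat_ne_zero, not_false_eq_true, zero_pow,
      mul_zero, sub_zero] at this
    linarith
  -- set up k and apply the auxiliary lemma
  set k : ℝ → ℝ := fun x => 2 / ε * (G x - G 0) with hk_def
  have hkd : ∀ x, HasDerivAt k (2 / ε * G1 x) x := fun x =>
    ((hGd x).sub_const (G 0)).const_mul (2 / ε)
  have hkc : Continuous k := by
    rw [continuous_iff_continuousAt]
    exact fun x => (hkd x).continuousAt
  have hknn : ∀ x, 0 ≤ k x := by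
    intro x
    rw [hk_def]
    have := hGmin x
    have h2 : (0:ℝ) ≤ 2 / ε := by positivity
    nlinarith
  set c : ℝ := Real.sqrt (M / ε + 1) with hc_def
  have hc : 0 < c := Real.sqrt_pos.2 (by positivity)
  have hc2 : c ^ 2 = M / ε + 1 := Real.sq_sqrt (by positivity)
  have hquad : ∀ x ∈ Icc (0:ℝ) W, k x ≤ c ^ 2 * x ^ 2 := by
    intro x hx
    rw [hk_def, hc2]
    have h1 := hGle x hx
    have h2 : 0 ≤ x ^ 2 := sq_nonneg x
    have h3 : 2 / ε * (G x - G 0) ≤ 2 / ε * (M / 2 * x ^ 2) := by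
      apply mul_le_mul_of_nonneg_left h1 (by positivity)
    have h4 : 2 / ε * (M / 2 * x ^ 2) = M / ε * x ^ 2 := by
      field_simp
    have h5 : M / ε * x ^ 2 ≤ (M / ε + 1) * x ^ 2 := by nlinarith
    linarith
  obtain ⟨Φ, α, hα, hΦ0, hΦH, hΦmono, hΦd⟩ :=
    pb_aux k hkc hknn H W c hH hW hc hquad
  set Φ' : ℝ → ℝ := fun y => Real.sqrt (k (Φ y) + α ^ 2) with hΦ'_def
  set Φ'' : ℝ → ℝ := fun y => ε⁻¹ * G1 (Φ y) with hΦ''_def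
  have hupos : ∀ y, 0 < k (Φ y) + α ^ 2 := fun y =>
    add_pos_of_nonneg_of_pos (hknn (Φ y)) (pow_pos hα 2)
  have hΦ'pos : ∀ y, 0 < Φ' y := fun y => Real.sqrt_pos.2 (hupos y)
  refine ⟨Φ, Φ', Φ'', hΦd, ?_, ?_, ?_, hΦ0, hΦH, hΦmono⟩
  · -- second derivative
    intro y hy
    have h1 : HasDerivAt (fun t => k (Φ t) + α ^ 2) (2 / ε * G1 (Φ y) * Φ' y) y :=
      ((hkd (Φ y)).comp y (hΦd y hy)).add_const _
    have h2 := (Real.hasDerivAt_sqrt (hupos y).ne').comp y h1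
    have h3 : 1 / (2 * Real.sqrt (k (Φ y) + α ^ 2)) * (2 / ε * G1 (Φ y) * Φ' y)
        = Φ'' y := by
      have h4 : Real.sqrt (k (Φ y) + α ^ 2) = Φ' y := rfl
      rw [h4, hΦ''_def]
      have h5 : Φ' y ≠ 0 := (hΦ'pos y).ne'
      field_simp
    rw [h3] at h2
    exact h2
  · -- continuity of the second derivative
    have hΦcont : ContinuousOn Φ (Icc 0 H) := fun y hy =>
      (hΦd y hy).continuousAt.continuousWithinAt
    exact continuousOn_const.mul (hG1cont.comp_continuousOn hΦcont)
  · -- the ODE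
    intro y hy
    rw [(hGd (Φ y)).deriv, hΦ''_def]
    field_simp
end

section
/- Let G : ℝ → ℝ be twice continuously differentiable and convex with G′(0) = 0, and let W > 0 and T > 0. Then there exists α > 0 such that ∫_0^W ( G(Φ) − G(0) + α² )^{−1/2} dΦ = T. -/
set_option maxHeartbeats 1000000


open Set Real MeasureTheory

/-- `∫_0^W (φ² + α²)^{-1/2} dφ = arsinh(W/α)` for `α > 0`. -/
private lemma arsinh_integral_aux {α : ℝ} (hα : 0 < α) (W : ℝ) :
    (∫ φ in (0:ℝ)..W, (Real.sqrt (φ ^ 2 + α ^ 2))⁻¹) = Real.arsinh (W / α) := by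
  have key : ∀ x : ℝ, HasDerivAt (fun φ => Real.arsinh (φ / α))
      ((Real.sqrt (x ^ 2 + α ^ 2))⁻¹) x := by
    intro x
    have h1 : HasDerivAt (fun φ : ℝ => φ / α) (1 / α) x := by
      simpa using (hasDerivAt_id x).div_const α
    have h2 := (Real.hasDerivAt_arsinh (x / α)).comp x h1
    refine h2.congr_deriv ?_
    have hsq : Real.sqrt (1 + (x / α) ^ 2) = Real.sqrt (x ^ 2 + α ^ 2) / α := by
      rw [show (1 : ℝ) + (x / α) ^ 2 = (x ^ 2 + α ^ 2) / α ^ 2 by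
        field_simp; ring]
      rw [Real.sqrt_div (by positivity), Real.sqrt_sq hα.le]
    rw [hsq]
    have hpos : (0:ℝ) < Real.sqrt (x ^ 2 + α ^ 2) := Real.sqrt_pos.2 (by positivity)
    field_simp
  have hcont : Continuous fun x : ℝ => (Real.sqrt (x ^ 2 + α ^ 2))⁻¹ := by
    apply Continuous.inv₀
    · exact Real.continuous_sqrt.comp (by continuity)
    · intro x
      exact (Real.sqrt_pos.2 (by positivity)).ne'
  have := intervalIntegral.integral_eq_sub_of_hasDerivAt
    (f := fun φ => Real.arsinh (φ / α)) (a := 0) (b := W)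
    (fun x _ => key x) (hcont.intervalIntegrable 0 W)
  simpa using this

/-- Solvability of the shooting equation: if `G` is `C²`, convex, with
`G′(0) = 0`, and `W, T > 0`, then there is `α > 0` with
`∫_0^W (G(Φ) − G(0) + α²)^{−1/2} dΦ = T`. -/
theorem shooting_equation_solvable
    (G : ℝ → ℝ) (hG_smooth : ContDiff ℝ 2 G) (hG_conv : ConvexOn ℝ Set.univ G)
    (hG'0 : deriv G 0 = 0) (W T : ℝ) (hW : 0 < W) (hT : 0 < T) :
    ∃ α > 0, (∫ φ in (0:ℝ)..W, (Real.sqrt (G φ - G 0 + α ^ 2))⁻¹) = T := by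
  classical
  have hGdiff : ∀ x : ℝ, DifferentiableAt ℝ G x := fun x =>
    (hG_smooth.differentiable (by norm_num)).differentiableAt
  -- `G 0` is a global minimum
  have hmin : ∀ φ : ℝ, G 0 ≤ G φ := by
    intro φ
    rcases lt_trichotomy φ 0 with h | h | h
    · have h2 := hG_conv.slope_le_deriv (mem_univ φ) (mem_univ 0) h (hGdiff 0)
      rw [hG'0, slope_def_field] at h2
      have hd : (0:ℝ) < 0 - φ := by linarith
      have h4 := mul_nonpos_of_nonpos_of_nonneg h2 hd.le
      rw [div_mul_cancel₀ _ hd.ne'] at h4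
      linarith
    · simp [h]
    · have h2 := hG_conv.deriv_le_slope (mem_univ 0) (mem_univ φ) h (hGdiff 0)
      rw [hG'0, slope_def_field] at h2
      have hd : (0:ℝ) < φ - 0 := by linarith
      have h4 := mul_nonneg h2 hd.le
      rw [div_mul_cancel₀ _ hd.ne'] at h4
      linarith
  -- regularity of derivatives
  have hG2 : ContDiff ℝ ((1 : ℕ∞) + 1) G := by
    exact_mod_cast hG_smooth
  have hG'C1 : ContDiff ℝ 1 (deriv G) := (contDiff_succ_iff_deriv.mp hG2).2.2
  have hG'diff : Differentiable ℝ (deriv G) := hG'C1.differentiable one_ne_zero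
  have hG'cont : Continuous (deriv G) := hG'C1.continuous
  have hG''cont : Continuous (deriv (deriv G)) := hG'C1.continuous_deriv le_rfl
  -- bound on the second derivative on `[0, W]`
  obtain ⟨M, hM⟩ := (isCompact_Icc (a := (0:ℝ)) (b := W)).exists_bound_of_continuousOn
    hG''cont.continuousOn
  have hM0 : 0 ≤ M := le_trans (norm_nonneg _) (hM 0 ⟨le_rfl, hW.le⟩)
  -- `deriv G t ≤ M * t` on `[0, W]`
  have hderiv_bound : ∀ t ∈ Icc (0:ℝ) W, deriv G t ≤ M * t := by
    intro t ht
    have hmean := (convex_Icc (0:ℝ) W).norm_image_sub_le_of_norm_hasDerivWithin_le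
      (f := deriv G) (f' := deriv (deriv G))
      (fun x _ => (hG'diff x).hasDerivAt.hasDerivWithinAt) hM ⟨le_rfl, hW.le⟩ ht
    rw [hG'0, sub_zero, sub_zero, Real.norm_eq_abs, Real.norm_eq_abs,
      abs_of_nonneg ht.1] at hmean
    exact (le_abs_self _).trans hmean
  -- quadratic upper bound on `G φ - G 0`
  have hquad : ∀ φ ∈ Icc (0:ℝ) W, G φ - G 0 ≤ M * φ ^ 2 := by
    intro φ hφ
    have hftc : G φ - G 0 = ∫ t in (0:ℝ)..φ, deriv G t :=
      (intervalIntegral.integral_deriv_eq_sub (fun x _ => hGdiff x)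
        (hG'cont.intervalIntegrable _ _)).symm
    have hIle : (∫ t in (0:ℝ)..φ, deriv G t) ≤ ∫ t in (0:ℝ)..φ, M * t := by
      apply intervalIntegral.integral_mono_on hφ.1 (hG'cont.intervalIntegrable _ _)
        ((continuous_const.mul continuous_id).intervalIntegrable _ _)
      intro t ht
      exact hderiv_bound t ⟨ht.1, ht.2.trans hφ.2⟩
    have hval : (∫ t in (0:ℝ)..φ, M * t) = M * (φ ^ 2 / 2) := by
      rw [intervalIntegral.integral_const_mul, integral_id]
      ring
    rw [hftc]
    refine hIle.trans ?_
    rw [hval]; nlinarith [sq_nonneg φ]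
  set C : ℝ := max M 1 with hC
  have hC1 : (1:ℝ) ≤ C := le_max_right _ _
  have hCpos : (0:ℝ) < C := lt_of_lt_of_le one_pos hC1
  have hkey : ∀ φ ∈ Icc (0:ℝ) W, ∀ α : ℝ, G φ - G 0 + α ^ 2 ≤ C * (φ ^ 2 + α ^ 2) := by
    intro φ hφ α
    have h1 := hquad φ hφ
    have h2 : M ≤ C := le_max_left _ _
    nlinarith [sq_nonneg φ, sq_nonneg α]
  -- global positivity and integrability of the integrand
  have hposG : ∀ φ : ℝ, 0 ≤ G φ - G 0 := fun φ => sub_nonneg.2 (hmin φ)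
  have hGcont : Continuous G := hG_smooth.continuous
  have hint : ∀ α : ℝ, 0 < α →
      Continuous (fun φ => (Real.sqrt (G φ - G 0 + α ^ 2))⁻¹) := by
    intro α hα
    apply Continuous.inv₀
    · exact Real.continuous_sqrt.comp (by continuity)
    · intro φ
      have : (0:ℝ) < G φ - G 0 + α ^ 2 := by have := hposG φ; positivity
      exact (Real.sqrt_pos.2 this).ne'
  -- lower bound on the integral
  have hlow : ∀ α : ℝ, 0 < α →
      (Real.sqrt C)⁻¹ * Real.arsinh (W / α) ≤
        ∫ φ in (0:ℝ)..W, (Real.sqrt (G φ - G 0 + α ^ 2))⁻¹ := by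
    intro α hα
    have hcont2 : Continuous (fun φ : ℝ => (Real.sqrt (C * (φ ^ 2 + α ^ 2)))⁻¹) := by
      apply Continuous.inv₀
      · exact Real.continuous_sqrt.comp (by continuity)
      · intro φ
        have : (0:ℝ) < C * (φ ^ 2 + α ^ 2) := by positivity
        exact (Real.sqrt_pos.2 this).ne'
    have hmono : (∫ φ in (0:ℝ)..W, (Real.sqrt (C * (φ ^ 2 + α ^ 2)))⁻¹) ≤
        ∫ φ in (0:ℝ)..W, (Real.sqrt (G φ - G 0 + α ^ 2))⁻¹ := by
      apply intervalIntegral.integral_mono_on hW.le (hcont2.intervalIntegrable _ _)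
        ((hint α hα).intervalIntegrable _ _)
      intro φ hφ
      have h1 : (0:ℝ) < G φ - G 0 + α ^ 2 := by have := hposG φ; positivity
      apply inv_anti₀ (Real.sqrt_pos.2 h1)
      exact Real.sqrt_le_sqrt (hkey φ hφ α)
    have hval : (∫ φ in (0:ℝ)..W, (Real.sqrt (C * (φ ^ 2 + α ^ 2)))⁻¹) =
        (Real.sqrt C)⁻¹ * Real.arsinh (W / α) := by
      have : ∀ φ : ℝ, (Real.sqrt (C * (φ ^ 2 + α ^ 2)))⁻¹ =
          (Real.sqrt C)⁻¹ * (Real.sqrt (φ ^ 2 + α ^ 2))⁻¹ := by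
        intro φ
        rw [Real.sqrt_mul hCpos.le, mul_inv]
      simp_rw [this]
      rw [intervalIntegral.integral_const_mul, arsinh_integral_aux hα]
    rw [← hval]; exact hmono
  -- upper bound on the integral
  have hup : ∀ α : ℝ, 0 < α →
      (∫ φ in (0:ℝ)..W, (Real.sqrt (G φ - G 0 + α ^ 2))⁻¹) ≤ W * α⁻¹ := by
    intro α hα
    have h1 : (∫ φ in (0:ℝ)..W, (Real.sqrt (G φ - G 0 + α ^ 2))⁻¹) ≤
        ∫ _φ in (0:ℝ)..W, α⁻¹ := by
      apply intervalIntegral.integral_mono_on hW.le ((hint α hα).intervalIntegrable _ _)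
        (intervalIntegrable_const)
      intro φ _
      apply inv_anti₀ hα
      calc α = Real.sqrt (α ^ 2) := (Real.sqrt_sq hα.le).symm
        _ ≤ Real.sqrt (G φ - G 0 + α ^ 2) := Real.sqrt_le_sqrt (by linarith [hposG φ])
    simpa using h1
  -- choose the endpoints
  set α₀ : ℝ := W / Real.exp (T * Real.sqrt C) with hα₀def
  have hα₀pos : 0 < α₀ := div_pos hW (Real.exp_pos _)
  set α₁ : ℝ := max α₀ (W / T) with hα₁def
  have hα₁pos : 0 < α₁ := lt_of_lt_of_le hα₀pos (le_max_left _ _)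
  have hα₀₁ : α₀ ≤ α₁ := le_max_left _ _
  have hsqrtCpos : 0 < Real.sqrt C := Real.sqrt_pos.2 hCpos
  -- lower endpoint: integral ≥ T
  have hFα₀ : T ≤ ∫ φ in (0:ℝ)..W, (Real.sqrt (G φ - G 0 + α₀ ^ 2))⁻¹ := by
    refine le_trans ?_ (hlow α₀ hα₀pos)
    have hWα₀ : W / α₀ = Real.exp (T * Real.sqrt C) := by
      rw [hα₀def]
      rw [div_div_eq_mul_div, mul_comm, mul_div_assoc, div_self hW.ne', mul_one]
    have harsinh : T * Real.sqrt C ≤ Real.arsinh (W / α₀) := by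
      rw [hWα₀]
      set x := Real.exp (T * Real.sqrt C) with hx
      have hxpos : 0 < x := Real.exp_pos _
      have h1 : Real.arsinh x = Real.log (x + Real.sqrt (1 + x ^ 2)) := rfl
      rw [h1]
      calc T * Real.sqrt C = Real.log x := (Real.log_exp _).symm
        _ ≤ Real.log (x + Real.sqrt (1 + x ^ 2)) := by
            rw [Real.log_le_log_iff hxpos (by positivity)]
            exact le_add_of_nonneg_right (Real.sqrt_nonneg _)
    calc T = (Real.sqrt C)⁻¹ * (T * Real.sqrt C) := by field_simp
      _ ≤ (Real.sqrt C)⁻¹ * Real.arsinh (W / α₀) := by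
          apply mul_le_mul_of_nonneg_left harsinh (by positivity)
  -- upper endpoint: integral ≤ T
  have hFα₁ : (∫ φ in (0:ℝ)..W, (Real.sqrt (G φ - G 0 + α₁ ^ 2))⁻¹) ≤ T := by
    refine (hup α₁ hα₁pos).trans ?_
    have h1 : W / T ≤ α₁ := le_max_right _ _
    have h2 : α₁⁻¹ ≤ (W / T)⁻¹ := inv_anti₀ (div_pos hW hT) h1
    calc W * α₁⁻¹ ≤ W * (W / T)⁻¹ := by
          apply mul_le_mul_of_nonneg_left h2 hW.le
      _ = T := by field_simp
  -- continuity of the (clamped) parametric integral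
  set F : ℝ → ℝ := fun a => ∫ φ in (0:ℝ)..W,
    (Real.sqrt (G φ - G 0 + (max a α₀) ^ 2))⁻¹ with hFdef
  have hFcont : Continuous F := by
    apply intervalIntegral.continuous_parametric_intervalIntegral_of_continuous'
    have : Continuous fun p : ℝ × ℝ =>
        (Real.sqrt (G p.2 - G 0 + (max p.1 α₀) ^ 2))⁻¹ := by
      apply Continuous.inv₀
      · apply Real.continuous_sqrt.comp
        apply Continuous.add
        · exact (hGcont.comp continuous_snd).sub continuous_const
        · exact ((continuous_fst.max continuous_const).pow 2)
      · intro p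
        have h1 : α₀ ≤ max p.1 α₀ := le_max_right _ _
        have h2 : α₀ ^ 2 ≤ (max p.1 α₀) ^ 2 := by nlinarith [hα₀pos.le]
        have : (0:ℝ) < G p.2 - G 0 + (max p.1 α₀) ^ 2 := by
          have := hposG p.2; nlinarith [hα₀pos]
        exact (Real.sqrt_pos.2 this).ne'
    exact this
  -- intermediate value theorem
  have hF₀ : F α₀ = ∫ φ in (0:ℝ)..W, (Real.sqrt (G φ - G 0 + α₀ ^ 2))⁻¹ := by
    rw [hFdef]; simp only [max_self]
  have hF₁ : F α₁ = ∫ φ in (0:ℝ)..W, (Real.sqrt (G φ - G 0 + α₁ ^ 2))⁻¹ := by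
    rw [hFdef]; simp only [max_eq_left hα₀₁]
  have hivt := intermediate_value_Icc' hα₀₁ hFcont.continuousOn
  have hTmem : T ∈ Icc (F α₁) (F α₀) := by
    constructor
    · rw [hF₁]; exact hFα₁
    · rw [hF₀]; exact hFα₀
  obtain ⟨α, hαmem, hαeq⟩ := hivt hTmem
  refine ⟨α, lt_of_lt_of_le hα₀pos hαmem.1, ?_⟩
  have : F α = ∫ φ in (0:ℝ)..W, (Real.sqrt (G φ - G 0 + α ^ 2))⁻¹ := by
    rw [hFdef]; simp only [max_eq_left hαmem.1]
  rw [← this]; exact hαeq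
end
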